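/- Let n, k, m be positive integers with n ≥ k + m, and let q be a prime power. Given a collection of at most q^(n-k-m+1) subspaces of F_q^n, each of dimension k, there exists an m-dimensional subspace of F_q^n that intersects each of the given k-subspaces trivially (i.e., only in the zero vector). -/

import Mathlib

open Finset

namespace ZFPaper

variable {V : Type*}

/-- Zero forcing propagation: `Forces G B v` means `v` eventually gets colored black
starting from the initially black set `B`. -/
inductive Forces (G : SimpleGraph V) (B : Set V) : V → Prop
  | init (v : V) : v ∈ B → Forces G B v
  | force (u v : V) : G.Adj u v → Forces G B u →
      (∀ w, G.Adj u w → w ≠ v → Forces G B w) → Forces G B v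

/-- `B` is a zero forcing set of `G`. -/
def IsZeroForcingSet (G : SimpleGraph V) (B : Set V) : Prop := ∀ v, Forces G B v

/-- The zero forcing number `Z(G)`. -/
noncomputable def zeroForcingNumber (G : SimpleGraph V) : ℕ :=
  sInf {m | ∃ B : Finset V, B.card = m ∧ IsZeroForcingSet G ↑B}

/-- The total zero forcing number `Z_t(G)`. -/
noncomputable def totalZeroForcingNumber (G : SimpleGraph V) : ℕ :=
  sInf {m | ∃ B : Finset V, B.card = m ∧ IsZeroForcingSet G ↑B ∧
    ∀ v ∈ B, ∃ u ∈ B, G.Adj v u}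

/-- The connected zero forcing number `Z_c(G)`. -/
noncomputable def connectedZeroForcingNumber (G : SimpleGraph V) : ℕ :=
  sInf {m | ∃ B : Finset V, B.card = m ∧ IsZeroForcingSet G ↑B ∧
    (G.induce (↑B : Set V)).Connected}

/-- The closed neighborhood of a vertex. -/
def closedNbhd (G : SimpleGraph V) (v : V) : Set V := G.neighborSet v ∪ {v}

/-- A Z-Grundy dominating sequence: each vertex has an open neighbor not yet dominated,
and at the end every vertex is dominated. -/
def IsZGrundySeq (G : SimpleGraph V) (l : List V) : Prop :=
  (∀ i : Fin l.length,
    ((G.neighborSet (l.get i)) \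
      (⋃ j : Fin l.length, ⋃ _ : (j : ℕ) < (i : ℕ), closedNbhd G (l.get j))).Nonempty) ∧
  ∀ v : V, ∃ i : Fin l.length, v ∈ closedNbhd G (l.get i)

/-- The Z-Grundy domination number `γ_gr^Z(G)`. -/
noncomputable def zGrundyNumber (G : SimpleGraph V) : ℕ :=
  sSup {m | ∃ l : List V, IsZGrundySeq G l ∧ l.length = m}

/-- The generalized Johnson graph `J_S(n,k)`. -/
def genJohnson (n k : ℕ) (S : Finset ℕ) :
    SimpleGraph {A : Finset (Fin n) // A.card = k} where
  Adj v w := v ≠ w ∧ (v.1 ∩ w.1).card ∈ S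
  symm := by
    constructor
    rintro v w ⟨h1, h2⟩
    exact ⟨h1.symm, by rwa [Finset.inter_comm]⟩
  loopless := by constructor; rintro v ⟨h1, -⟩; exact h1 rfl

/-- The generalized Grassmann graph `J_{q,S}(n,k)` over a finite field `F` of order `q`. -/
def genGrassmann (F : Type*) [Field F] (n k : ℕ) (S : Finset ℕ) :
    SimpleGraph {W : Submodule F (Fin n → F) // Module.finrank F W = k} where
  Adj v w := v ≠ w ∧ Module.finrank F ↥(v.1 ⊓ w.1) ∈ S
  symm := by
    constructor
    rintro v w ⟨h1, h2⟩
    exact ⟨h1.symm, by rwa [inf_comm w.1 v.1]⟩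
  loopless := by constructor; rintro v ⟨h1, -⟩; exact h1 rfl

/-- The Hamming graph `H(n,q)`. -/
def hammingGraph (n q : ℕ) : SimpleGraph (Fin n → Fin q) where
  Adj x y := hammingDist x y = 1
  symm := ⟨fun x y (h : hammingDist x y = 1) => by
    show hammingDist y x = 1; rwa [hammingDist_comm]⟩
  loopless := ⟨fun x (h : hammingDist x x = 1) => by
    rw [hammingDist_self] at h; exact absurd h (by norm_num)⟩


/-- Lemma (sparse subspaces). -/
theorem exists_subspace_trivial_inter (q n k m : ℕ) (hk : 0 < k) (hm : 0 < m) (hn : 0 < n)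
    (hkm : k + m ≤ n) (F : Type) [Field F] [Fintype F] (hF : Fintype.card F = q)
    (C : Finset (Submodule F (Fin n → F)))
    (hcard : C.card ≤ q ^ (n - k - m + 1))
    (hdim : ∀ U ∈ C, Module.finrank F ↥U = k) :
    ∃ W : Submodule F (Fin n → F), Module.finrank F ↥W = m ∧ ∀ U ∈ C, W ⊓ U = ⊥ := by
  classical
  have hq2 : 2 ≤ q := by rw [← hF]; exact Fintype.one_lt_card
  have hfinV : Module.finrank F (Fin n → F) = n := by simp [Module.finrank_pi]
  have hcardV : Fintype.card (Fin n → F) = q ^ n := by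
    rw [Module.card_eq_pow_finrank (K := F), hfinV, hF]
  suffices H : ∀ i, i ≤ m → ∃ W : Submodule F (Fin n → F),
      Module.finrank F ↥W = i ∧ ∀ U ∈ C, W ⊓ U = ⊥ by
    exact H m le_rfl
  intro i
  induction i with
  | zero =>
    exact fun _ => ⟨⊥, finrank_bot F _, fun U _ => bot_inf_eq U⟩
  | succ i ih =>
    intro hi
    obtain ⟨W, hWrank, hWint⟩ := ih (by omega)
    have him : i < m := by omega
    have hv : ∃ v : Fin n → F, v ∉ W ∧ ∀ U ∈ C, v ∉ W ⊔ U := by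
      rcases C.eq_empty_or_nonempty with hC | hC
      · have hWne : W ≠ ⊤ := by
          intro h
          rw [h, finrank_top, hfinV] at hWrank
          omega
        obtain ⟨v, hv⟩ : ∃ v, v ∉ W := by
          by_contra h
          push_neg at h
          exact hWne (Submodule.eq_top_iff'.2 h)
        exact ⟨v, hv, by simp [hC]⟩
      · set f : Submodule F (Fin n → F) → Finset (Fin n → F) :=
          fun U => Set.toFinset ((W ⊔ U : Submodule F (Fin n → F)) : Set (Fin n → F)) with hf
        have hfcard : ∀ U ∈ C, (f U).card ≤ q ^ (k + m - 1) := by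
          intro U hU
          have h1 : (f U).card = Fintype.card ↥(W ⊔ U) := by
            rw [hf, Set.toFinset_card]
            exact Fintype.card_congr (Equiv.refl _)
          rw [h1, Module.card_eq_pow_finrank (K := F), hF]
          apply Nat.pow_le_pow_right (by omega)
          have h2 := Submodule.finrank_sup_add_finrank_inf_eq W U
          have h3 := hdim U hU
          omega
        have h0mem : ∀ U ∈ C, (0 : Fin n → F) ∈ f U := by
          intro U hU
          rw [hf, Set.mem_toFinset]
          exact Submodule.zero_mem _
        set B := C.biUnion f with hB
        have hBcard : B.card < q ^ n := by
          have hsub : B ⊆ insert 0 (C.biUnion fun U => (f U).erase 0) := by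
            intro x hx
            obtain ⟨U, hU, hxU⟩ := Finset.mem_biUnion.1 hx
            by_cases hx0 : x = 0
            · exact hx0 ▸ Finset.mem_insert_self _ _
            · exact Finset.mem_insert_of_mem
                (Finset.mem_biUnion.2 ⟨U, hU, Finset.mem_erase.2 ⟨hx0, hxU⟩⟩)
          have h1 : B.card ≤ 1 + ∑ U ∈ C, ((f U).erase 0).card :=
            le_trans (Finset.card_le_card hsub)
              (le_trans (Finset.card_insert_le _ _) (by
                have := Finset.card_biUnion_le (s := C) (t := fun U => (f U).erase 0)
                omega))
          have h2 : ∑ U ∈ C, ((f U).erase 0).card ≤ C.card * (q ^ (k + m - 1) - 1) := by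
            calc ∑ U ∈ C, ((f U).erase 0).card ≤ ∑ _U ∈ C, (q ^ (k + m - 1) - 1) :=
                  Finset.sum_le_sum (fun U hU => by
                    have hce := Finset.card_erase_of_mem (h0mem U hU)
                    have hcc := hfcard U hU
                    omega)
              _ = C.card * (q ^ (k + m - 1) - 1) := by
                  rw [Finset.sum_const, smul_eq_mul]
          have h3 : C.card * (q ^ (k + m - 1) - 1) ≤ q ^ (n - k - m + 1) * (q ^ (k + m - 1) - 1) :=
            Nat.mul_le_mul_right _ hcard
          have h4 : q ^ (n - k - m + 1) * q ^ (k + m - 1) = q ^ n := by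
            rw [← pow_add]; congr 1; omega
          have h5 : 1 ≤ q ^ (k + m - 1) := Nat.one_le_pow _ _ (by omega)
          have h6 : q ≤ q ^ (n - k - m + 1) :=
            le_trans (le_of_eq (pow_one q).symm) (Nat.pow_le_pow_right (by omega) (by omega))
          have h8 : q ≤ q ^ n :=
            le_trans (le_of_eq (pow_one q).symm) (Nat.pow_le_pow_right (by omega) (by omega))
          have h7 : q ^ (n - k - m + 1) * (q ^ (k + m - 1) - 1) + q ^ (n - k - m + 1)
              = q ^ n := by
            calc q ^ (n - k - m + 1) * (q ^ (k + m - 1) - 1) + q ^ (n - k - m + 1)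
                = q ^ (n - k - m + 1) * (q ^ (k + m - 1) - 1 + 1) := by ring
              _ = q ^ n := by rw [Nat.sub_add_cancel h5, h4]
          omega
        obtain ⟨v, hvB⟩ : ∃ v, v ∉ B := by
          by_contra h
          push_neg at h
          have : (Finset.univ : Finset (Fin n → F)) ⊆ B := fun x _ => h x
          have := Finset.card_le_card this
          rw [Finset.card_univ, hcardV] at this
          omega
        have hvU : ∀ U ∈ C, v ∉ W ⊔ U := by
          intro U hU hmem
          exact hvB (Finset.mem_biUnion.2 ⟨U, hU, by rw [hf, Set.mem_toFinset]; exact hmem⟩)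
        obtain ⟨U0, hU0⟩ := hC
        exact ⟨v, fun h => hvU U0 hU0 (Submodule.mem_sup_left h), hvU⟩
    obtain ⟨v, hvW, hvU⟩ := hv
    have hv0 : v ≠ 0 := fun h => hvW (h ▸ W.zero_mem)
    refine ⟨W ⊔ Submodule.span F {v}, ?_, ?_⟩
    · have hdisj : W ⊓ Submodule.span F {v} = ⊥ :=
        ((Submodule.disjoint_span_singleton' hv0).2 hvW).eq_bot
      have h := Submodule.finrank_sup_add_finrank_inf_eq W (Submodule.span F {v})
      rw [hdisj, finrank_bot, finrank_span_singleton hv0, hWrank] at h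
      omega
    · intro U hU
      rw [eq_bot_iff]
      rintro x hx
      obtain ⟨hx1, hx2⟩ := Submodule.mem_inf.1 hx
      obtain ⟨w, hw, z, hz, rfl⟩ := Submodule.mem_sup.1 hx1
      obtain ⟨c, rfl⟩ := Submodule.mem_span_singleton.1 hz
      by_cases hc : c = 0
      · subst hc
        rw [zero_smul, add_zero] at hx2 ⊢
        have hwm : w ∈ W ⊓ U := Submodule.mem_inf.2 ⟨hw, hx2⟩
        rw [hWint U hU] at hwm
        exact hwm
      · exfalso
        apply hvU U hU
        have h1 : w + c • v ∈ W ⊔ U := Submodule.mem_sup_right hx2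
        have h2 : (w : Fin n → F) ∈ W ⊔ U := Submodule.mem_sup_left hw
        have h3 : c • v ∈ W ⊔ U := by
          have := Submodule.sub_mem _ h1 h2
          simpa using this
        have := Submodule.smul_mem _ c⁻¹ h3
        rwa [smul_smul, inv_mul_cancel₀ hc, one_smul] at this

end ZFPaper
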